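/- Let A be the 4×4 real matrix with rows (−√3/8, −√3/24, 0, 0), (√3/24, √3/8, 0, 0), (1/4 − √3/8, 1/4 + √3/8, 1/4, 1/4 − √3/6), (1/4 − √3/8, 1/4 + √3/8, 1/4 + √3/6, 1/4), b = (1/4 − √3/8, 1/4 + √3/8, 1/4 + √3/8, 1/4 − √3/8), and 𝟙 = (1,1,1,1). Then for every z ∈ ℂ such that the matrix I − z·A is invertible and 1 − z/2 + z²/12 ≠ 0, the stability function satisfies 1 + z·bᵀ(I − z·A)⁻¹𝟙 = (1 + z/2 + z²/12)/(1 − z/2 + z²/12), i.e. it equals the (2,2)-Padé approximation of the exponential, which is also the stability function of the 2-stage Gauss–Legendre method of order 4. -/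

import Mathlib

open Matrix

/-- Coefficient matrix of the 4-stage conjugate-symplectic method, regarded as complex. -/
noncomputable def hatAC : Matrix (Fin 4) (Fin 4) ℂ :=
  !![-(Real.sqrt 3 : ℂ)/8, -(Real.sqrt 3 : ℂ)/24, 0, 0;
     (Real.sqrt 3 : ℂ)/24, (Real.sqrt 3 : ℂ)/8, 0, 0;
     1/4 - (Real.sqrt 3 : ℂ)/8, 1/4 + (Real.sqrt 3 : ℂ)/8, 1/4, 1/4 - (Real.sqrt 3 : ℂ)/6;
     1/4 - (Real.sqrt 3 : ℂ)/8, 1/4 + (Real.sqrt 3 : ℂ)/8, 1/4 + (Real.sqrt 3 : ℂ)/6, 1/4]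

/-- Weights of the 4-stage conjugate-symplectic method, regarded as complex. -/
noncomputable def hatBC : Fin 4 → ℂ :=
  ![1/4 - (Real.sqrt 3 : ℂ)/8, 1/4 + (Real.sqrt 3 : ℂ)/8,
    1/4 + (Real.sqrt 3 : ℂ)/8, 1/4 - (Real.sqrt 3 : ℂ)/8]

/-! Put `q(z) = 1 - z/2 + z²/12`, `p(z) = 1 + z/2 + z²/12` and `s(z) = 1 - z²/24`. The vector
`u(z) = (q·(1 - √3z/6), q·(1 + √3z/6), p·(1 - √3z/6), p·(1 + √3z/6))` satisfies
`(I - zA) u = s q · 𝟙` identically in `z`, and `bᵀu = s`. If `s(z) = 0`, invertibility of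
`I - zA` would force `u = 0`, which is impossible as `u₀ + u₁ = 2q ≠ 0`. Hence
`(I - zA)⁻¹ 𝟙 = u / (s q)` and `R(z) = 1 + z s / (s q) = 1 + z / q = p / q`. -/

lemma Matrix.inv_mulVec_const_eq_of_mulVec_eq_const {n K : Type*} [Fintype n] [DecidableEq n]
    [Field K] {A : Matrix n n K} (hA : IsUnit A) {u : n → K} {c : K} (hc : c ≠ 0)
    (h : A *ᵥ u = fun _ => c) : A⁻¹ *ᵥ (fun _ => 1) = c⁻¹ • u := by
  have := hA.invertible
  refine inv_mulVec_eq_vec ?_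
  rw [mulVec_smul, h]
  ext
  simp [hc]

lemma Complex.ofReal_sqrt_three_sq : ((Real.sqrt 3 : ℂ)) ^ 2 = 3 := by
  norm_cast
  simp

noncomputable def hatScaledStages (z : ℂ) : Fin 4 → ℂ :=
  ![(1 - z/2 + z^2/12) * (1 - z * Real.sqrt 3 / 6), (1 - z/2 + z^2/12) * (1 + z * Real.sqrt 3 / 6),
    (1 + z/2 + z^2/12) * (1 - z * Real.sqrt 3 / 6), (1 + z/2 + z^2/12) * (1 + z * Real.sqrt 3 / 6)]

lemma one_sub_smul_hatAC_mulVec_hatScaledStages (z : ℂ) :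
    (1 - z • hatAC) *ᵥ hatScaledStages z = fun _ => (1 - z^2/24) * (1 - z/2 + z^2/12) := by
  ext i
  fin_cases i <;>
    simp only [mulVec, dotProduct, Fin.sum_univ_four, hatAC, hatScaledStages, smul_of, smul_cons,
      smul_eq_mul, smul_empty, Matrix.sub_apply, one_apply, of_apply, cons_val', cons_val_fin_one,
      cons_val, cons_val_zero, cons_val_one, Fin.isValue, Fin.reduceFinMk, Fin.reduceEq,
      ↓reduceIte] <;>
    grind [Complex.ofReal_sqrt_three_sq]

lemma hatBC_dotProduct_hatScaledStages (z : ℂ) : hatBC ⬝ᵥ hatScaledStages z = 1 - z^2/24 := by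
  simp only [dotProduct, Fin.sum_univ_four, hatBC, hatScaledStages, cons_val_zero, cons_val_one,
    cons_val]
  grind [Complex.ofReal_sqrt_three_sq]

lemma hatScaledStages_ne_zero {z : ℂ} (hden : 1 - z/2 + z^2/12 ≠ 0) : hatScaledStages z ≠ 0 := by
  intro h
  have hsum : hatScaledStages z 0 + hatScaledStages z 1 = 2 * (1 - z/2 + z^2/12) := by
    simp only [hatScaledStages, cons_val_zero, cons_val_one]
    ring
  simp [h, hden] at hsum

theorem stmt6 (z : ℂ) (hinv : IsUnit (1 - z • hatAC))
    (hden : 1 - z/2 + z^2/12 ≠ 0) :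
    1 + z * (hatBC ⬝ᵥ ((1 - z • hatAC)⁻¹ *ᵥ (fun _ => 1)))
      = (1 + z/2 + z^2/12) / (1 - z/2 + z^2/12) := by
  have hs : (1 - z^2/24 : ℂ) ≠ 0 := by
    intro hs_eq
    refine hatScaledStages_ne_zero hden (mulVec_injective_iff_isUnit.mpr hinv ?_)
    rw [one_sub_smul_hatAC_mulVec_hatScaledStages, hs_eq, zero_mul, mulVec_zero]
    rfl
  have hstages := (1 - z • hatAC).inv_mulVec_const_eq_of_mulVec_eq_const hinv
    (mul_ne_zero hs hden) (one_sub_smul_hatAC_mulVec_hatScaledStages z)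
  rw [hstages, dotProduct_smul, hatBC_dotProduct_hatScaledStages, smul_eq_mul, mul_inv,
    mul_right_comm, inv_mul_cancel₀ hs, one_mul, eq_div_iff hden, add_mul, mul_assoc,
    inv_mul_cancel₀ hden]
  ring
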